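/- arXiv:2306.00061 — 5 statements merged into one kernel-verified Lean document; each statement's English description precedes it below -/
import Mathlib

section
/- Let n be a positive integer and let O be a Hermitian complex n×n matrix written as O = P − Q, where P and Q are positive semidefinite n×n matrices. Let d be a real number with d > 0 and Re(tr P) + Re(tr Q) ≤ d. Then there exists a complex matrix ρ' indexed by (Fin 2 × Fin n), depending only on P, Q and d, that is positive semidefinite with trace 1, such that for every positive semidefinite complex n×n matrix ρ with trace 1, tr( ρ' · ( d · ((E₀₀ − E₁₁) ⊗ ρ) ) ) = tr( ρ · O ), where E₀₀ and E₁₁ are the 2×2 matrices with a single 1 in position (0,0) resp. (1,1), ⊗ is the Kronecker product, and matrix multiplication and trace are the usual ones. -/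
open Matrix Kronecker
open scoped ComplexOrder

/-!
Take σ = d⁻¹ (E₀₀ ⊗ P + E₁₁ ⊗ Q), which is positive semidefinite with trace at most 1, and
pad it with a nonnegative multiple of the identity to get a state ρ'. Since E₀₀ − E₁₁ is
traceless, the identity part is invisible to the observable (E₀₀ − E₁₁) ⊗ ρ, while the
block-diagonal part gives tr(Pρ) − tr(Qρ) = tr(ρO).
-/

namespace Matrix

variable {𝕜 ι : Type*} [RCLike 𝕜] [Fintype ι]

lemma trace_kronecker_mul_kronecker {α m k : Type*} [CommSemiring α] [Fintype m] [Fintype k]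
    (A C : Matrix m m α) (B D : Matrix k k α) :
    ((A ⊗ₖ B) * (C ⊗ₖ D)).trace = (A * C).trace * (B * D).trace := by
  rw [← mul_kronecker_mul, trace_kronecker]

omit [Fintype ι] in
lemma posSemidef_single_one [DecidableEq ι] (i : ι) : (single i i (1 : 𝕜)).PosSemidef := by
  rw [← diagonal_single]
  exact PosSemidef.diagonal (Pi.single_nonneg.mpr zero_le_one)

lemma PosSemidef.ofReal_re_trace {A : Matrix ι ι 𝕜} (hA : A.PosSemidef) :
    (RCLike.re A.trace : 𝕜) = A.trace :=
  RCLike.conj_eq_iff_re.mp (by rw [starRingEnd_apply, ← trace_conjTranspose, hA.isHermitian.eq])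

section padToUnitTrace

variable [DecidableEq ι]

noncomputable def padToUnitTrace (σ : Matrix ι ι 𝕜) : Matrix ι ι 𝕜 :=
  σ + ((1 - RCLike.re σ.trace) / Fintype.card ι : ℝ) • 1

lemma PosSemidef.padToUnitTrace {σ : Matrix ι ι 𝕜} (hσ : σ.PosSemidef)
    (htr : RCLike.re σ.trace ≤ 1) :
    (padToUnitTrace σ).PosSemidef :=
  hσ.add (PosSemidef.one.smul (div_nonneg (sub_nonneg.mpr htr) (Nat.cast_nonneg _)))

lemma trace_padToUnitTrace [Nonempty ι] {σ : Matrix ι ι 𝕜} (hσ : σ.PosSemidef) :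
    (padToUnitTrace σ).trace = 1 := by
  have hcard : (Fintype.card ι : ℝ) ≠ 0 := Nat.cast_ne_zero.mpr Fintype.card_ne_zero
  rw [padToUnitTrace, trace_add, trace_smul, trace_one, ← hσ.ofReal_re_trace,
    RCLike.real_smul_eq_coe_mul]
  push_cast
  field_simp
  ring

lemma trace_padToUnitTrace_mul_of_trace_eq_zero (σ : Matrix ι ι 𝕜) {X : Matrix ι ι 𝕜}
    (hX : X.trace = 0) : (padToUnitTrace σ * X).trace = (σ * X).trace := by
  rw [padToUnitTrace, add_mul, trace_add, smul_mul_assoc, one_mul, trace_smul, hX, smul_zero,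
    add_zero]

end padToUnitTrace

noncomputable def blockDiagTwo (P Q : Matrix ι ι 𝕜) : Matrix (Fin 2 × ι) (Fin 2 × ι) 𝕜 :=
  single 0 0 1 ⊗ₖ P + single 1 1 1 ⊗ₖ Q

variable {P Q : Matrix ι ι 𝕜}

lemma PosSemidef.blockDiagTwo (hP : P.PosSemidef) (hQ : Q.PosSemidef) :
    (blockDiagTwo P Q).PosSemidef :=
  ((posSemidef_single_one 0).kronecker hP).add ((posSemidef_single_one 1).kronecker hQ)

lemma trace_blockDiagTwo : (blockDiagTwo P Q).trace = P.trace + Q.trace := by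
  simp [blockDiagTwo, trace_kronecker]

lemma trace_single_sub_single :
    (single 0 0 1 - single 1 1 1 : Matrix (Fin 2) (Fin 2) 𝕜).trace = 0 := by
  simp [trace_sub]

lemma trace_blockDiagTwo_mul_kronecker (ρ : Matrix ι ι 𝕜) :
    (blockDiagTwo P Q * ((single 0 0 1 - single 1 1 1) ⊗ₖ ρ)).trace
      = (P * ρ).trace - (Q * ρ).trace := by
  have h₀ : (single 0 0 1 * (single 0 0 1 - single 1 1 1) : Matrix (Fin 2) (Fin 2) 𝕜).trace = 1 := by
    simp [mul_sub]
  have h₁ : (single 1 1 1 * (single 0 0 1 - single 1 1 1) : Matrix (Fin 2) (Fin 2) 𝕜).trace = -1 := by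
    simp [mul_sub]
  rw [blockDiagTwo, add_mul, trace_add, trace_kronecker_mul_kronecker,
    trace_kronecker_mul_kronecker, h₀, h₁]
  ring

end Matrix

theorem stmt_0_general (n : ℕ) (hn : 0 < n)
    (O P Q : Matrix (Fin n) (Fin n) ℂ)
    (hOPQ : O = P - Q)
    (hP : P.PosSemidef) (hQ : Q.PosSemidef)
    (d : ℝ) (hd : 0 < d)
    (htr : P.trace.re + Q.trace.re ≤ d) :
    ∃ ρ' : Matrix (Fin 2 × Fin n) (Fin 2 × Fin n) ℂ,
      ρ'.PosSemidef ∧ ρ'.trace = 1 ∧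
      ∀ ρ : Matrix (Fin n) (Fin n) ℂ, ρ.PosSemidef → ρ.trace = 1 →
        (ρ' * ((d : ℂ) • ((Matrix.single (0 : Fin 2) (0 : Fin 2) (1 : ℂ) -
            Matrix.single (1 : Fin 2) (1 : Fin 2) (1 : ℂ)) ⊗ₖ ρ))).trace
          = (ρ * O).trace := by
  have : NeZero n := ⟨hn.ne'⟩
  set σ := d⁻¹ • blockDiagTwo P Q
  have hσ : σ.PosSemidef := (hP.blockDiagTwo hQ).smul (inv_nonneg.mpr hd.le)
  have hσtr : RCLike.re σ.trace ≤ 1 := by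
    simp only [σ, trace_smul, trace_blockDiagTwo, RCLike.re_to_complex, Complex.smul_re,
      Complex.add_re, smul_eq_mul]
    exact (inv_mul_le_one₀ hd).mpr htr
  refine ⟨padToUnitTrace σ, hσ.padToUnitTrace hσtr, trace_padToUnitTrace hσ, fun ρ _ _ => ?_⟩
  calc _ = (σ * ((d : ℂ) • ((single 0 0 1 - single 1 1 1) ⊗ₖ ρ))).trace :=
        trace_padToUnitTrace_mul_of_trace_eq_zero σ
          (by rw [trace_smul, trace_kronecker, trace_single_sub_single, zero_mul, smul_zero])
    _ = (P * ρ).trace - (Q * ρ).trace := by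
        rw [← trace_blockDiagTwo_mul_kronecker, smul_mul_assoc, mul_smul_comm, trace_smul,
          trace_smul, smul_eq_mul, Complex.real_smul, ← mul_assoc, ← Complex.ofReal_mul,
          inv_mul_cancel₀ hd.ne', Complex.ofReal_one, one_mul]
    _ = (ρ * O).trace := by rw [hOPQ, mul_sub, trace_sub, trace_mul_comm ρ P, trace_mul_comm ρ Q]

theorem stmt_0 (n : ℕ) (hn : 0 < n)
    (O P Q : Matrix (Fin n) (Fin n) ℂ)
    (hO : O.IsHermitian) (hOPQ : O = P - Q)
    (hP : P.PosSemidef) (hQ : Q.PosSemidef)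
    (d : ℝ) (hd : 0 < d)
    (htr : P.trace.re + Q.trace.re ≤ d) :
    ∃ ρ' : Matrix (Fin 2 × Fin n) (Fin 2 × Fin n) ℂ,
      ρ'.PosSemidef ∧ ρ'.trace = 1 ∧
      ∀ ρ : Matrix (Fin n) (Fin n) ℂ, ρ.PosSemidef → ρ.trace = 1 →
        (ρ' * ((d : ℂ) • ((Matrix.single (0 : Fin 2) (0 : Fin 2) (1 : ℂ) -
            Matrix.single (1 : Fin 2) (1 : Fin 2) (1 : ℂ)) ⊗ₖ ρ))).trace
          = (ρ * O).trace :=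
  stmt_0_general n hn O P Q hOPQ hP hQ d hd htr
end

section
/- Let n ≥ 1 and let P and Q be positive semidefinite complex n×n matrices, and let d be a real number with d > 0 and Re(tr P) + Re(tr Q) ≤ d. Then the matrix ρ' indexed by (Fin 2 × Fin n) defined by ρ' = (1/d) · ( E₀₀ ⊗ P + E₁₁ ⊗ Q ) + ((d − Re(tr P) − Re(tr Q)) / (2·n·d)) · I, where I is the identity on (Fin 2 × Fin n), E₀₀ and E₁₁ are the 2×2 matrices with a single 1 in position (0,0) resp. (1,1), and ⊗ is the Kronecker product, is positive semidefinite and has trace 1. -/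
open Matrix Kronecker
open scoped ComplexOrder

theorem Matrix.posSemidef_single_self {R n : Type*} [CommRing R] [PartialOrder R] [StarRing R]
    [StarOrderedRing R] [Fintype n] [DecidableEq n] (i : n) {r : R} (hr : 0 ≤ r) :
    (single i i r).PosSemidef := by
  rw [← diagonal_single]
  exact .diagonal (Pi.single_nonneg.2 hr)

theorem Matrix.PosSemidef.ofReal_re_trace_s1 {n : Type*} [Fintype n] {A : Matrix n n ℂ}
    (hA : A.PosSemidef) : (A.trace.re : ℂ) = A.trace :=
  (Complex.eq_re_of_ofReal_le (by exact_mod_cast hA.trace_nonneg)).symm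

theorem stmt_1 (n : ℕ) (hn : 1 ≤ n)
    (P Q : Matrix (Fin n) (Fin n) ℂ)
    (hP : P.PosSemidef) (hQ : Q.PosSemidef)
    (d : ℝ) (hd : 0 < d)
    (htr : P.trace.re + Q.trace.re ≤ d) :
    ((1 / (d : ℂ)) • (Matrix.single (0 : Fin 2) (0 : Fin 2) (1 : ℂ) ⊗ₖ P +
        Matrix.single (1 : Fin 2) (1 : Fin 2) (1 : ℂ) ⊗ₖ Q) +
      (((d - P.trace.re - Q.trace.re) / (2 * n * d) : ℝ) : ℂ) •
        (1 : Matrix (Fin 2 × Fin n) (Fin 2 × Fin n) ℂ)).PosSemidef ∧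
    ((1 / (d : ℂ)) • (Matrix.single (0 : Fin 2) (0 : Fin 2) (1 : ℂ) ⊗ₖ P +
        Matrix.single (1 : Fin 2) (1 : Fin 2) (1 : ℂ) ⊗ₖ Q) +
      (((d - P.trace.re - Q.trace.re) / (2 * n * d) : ℝ) : ℂ) •
        (1 : Matrix (Fin 2 × Fin n) (Fin 2 × Fin n) ℂ)).trace = 1 := by
  have hblocks := ((posSemidef_single_self (0 : Fin 2) zero_le_one).kronecker hP).add
    ((posSemidef_single_self (1 : Fin 2) zero_le_one).kronecker hQ)
  have hc : (0 : ℂ) ≤ (((d - P.trace.re - Q.trace.re) / (2 * n * d) : ℝ) : ℂ) := by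
    exact_mod_cast div_nonneg (by linarith) (by positivity)
  refine ⟨(hblocks.smul (by exact_mod_cast (one_div_pos.2 hd).le)).add (PosSemidef.one.smul hc),
    ?_⟩
  have htrace_re : 1 / d * (P.trace.re + Q.trace.re) +
      (d - P.trace.re - Q.trace.re) / (2 * n * d) * (2 * n) = 1 := by
    have : (n : ℝ) ≠ 0 := by positivity
    field_simp
    ring
  simp only [trace_add, trace_smul, trace_kronecker, trace_single_eq_same, one_mul, trace_one,
    Fintype.card_prod, Fintype.card_fin, smul_eq_mul]
  rw [← hP.ofReal_re_trace_s1, ← hQ.ofReal_re_trace_s1]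
  exact_mod_cast htrace_re
end

section
/- Let p and q be distinct primes, both congruent to 2 modulo 3, and let N = p·q. Then there exists a natural number d such that for every y in ZMod N (the integers modulo N), (y³)^d = y; that is, x ↦ x^d is a (left and, by bijectivity of cubing, two-sided) inverse of the cube map on ZMod N. -/
/-!
Write `m = (p - 1)(q - 1)`. Since `p ≡ q ≡ 2 (mod 3)`, neither `p - 1` nor `q - 1` is divisible
by `3`, so `3` is invertible modulo `m`: `3 d = m k + 1` for some `d, k`. By Fermat's little
theorem `a ^ (m k + 1) = a` in `ZMod p` and in `ZMod q` (also for `a = 0`), hence in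
`ZMod (p q) ≃+* ZMod p × ZMod q`, so `(y ^ 3) ^ d = y ^ (m k + 1) = y`.
-/

namespace ZMod

lemma pow_card_sub_one_mul_add_one {p : ℕ} [Fact p.Prime] (a : ZMod p) (k : ℕ) :
    a ^ ((p - 1) * k + 1) = a := by
  rcases eq_or_ne a 0 with rfl | ha
  · simp
  · rw [pow_succ, pow_mul, pow_card_sub_one_eq_one ha, one_pow, one_mul]

lemma pow_eq_self_of_coprime {m n e : ℕ} (hmn : m.Coprime n) (hm : ∀ a : ZMod m, a ^ e = a)
    (hn : ∀ b : ZMod n, b ^ e = b) (y : ZMod (m * n)) : y ^ e = y :=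
  (chineseRemainder hmn).injective <| by
    rw [map_pow]
    exact Prod.ext (hm _) (hn _)

/-- Correctness of RSA decryption for a squarefree modulus `p q`. -/
lemma exists_pow_pow_eq_self {p q e : ℕ} (hp : p.Prime) (hq : q.Prime) (hpq : p ≠ q)
    (he : e.Coprime ((p - 1) * (q - 1))) : ∃ d : ℕ, ∀ y : ZMod (p * q), (y ^ e) ^ d = y := by
  have := Fact.mk hp
  have := Fact.mk hq
  have hm : 1 < (p - 1) * (q - 1) := by
    have := hp.two_le
    have := hq.two_le
    rw [Nat.one_lt_mul_iff]
    omega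
  obtain ⟨d, -, hd⟩ := Nat.exists_mul_mod_eq_one_of_coprime he hm
  set k := e * d / ((p - 1) * (q - 1))
  have hed : e * d = (p - 1) * (q - 1) * k + 1 := by
    have := Nat.div_add_mod (e * d) ((p - 1) * (q - 1))
    rwa [hd, eq_comm] at this
  refine ⟨d, fun y => ?_⟩
  rw [← pow_mul, hed]
  refine pow_eq_self_of_coprime ((Nat.coprime_primes hp hq).mpr hpq) (fun a => ?_) (fun b => ?_) y
  · rw [mul_assoc]
    exact pow_card_sub_one_mul_add_one a _
  · rw [mul_comm (p - 1), mul_assoc]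
    exact pow_card_sub_one_mul_add_one b _

end ZMod

lemma Nat.coprime_three_sub_one_of_mod_three_eq_two {p : ℕ} (hp : p % 3 = 2) :
    Nat.Coprime 3 (p - 1) := by
  rw [Nat.Prime.coprime_iff_not_dvd Nat.prime_three]
  omega

theorem stmt_9 (p q : ℕ) (hp : p.Prime) (hq : q.Prime) (hpq : p ≠ q)
    (hp3 : p % 3 = 2) (hq3 : q % 3 = 2) (N : ℕ) (hN : N = p * q) :
    ∃ d : ℕ, ∀ y : ZMod N, (y ^ 3) ^ d = y := by
  subst hN
  exact ZMod.exists_pow_pow_eq_self hp hq hpq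
    ((Nat.coprime_three_sub_one_of_mod_three_eq_two hp3).mul_right
      (Nat.coprime_three_sub_one_of_mod_three_eq_two hq3))
end

section
/- Let N ≥ 3 be an odd natural number. For s in ZMod N define the cyclic interval I_s = { y ∈ ZMod N : (y − s).val ≤ (N−1)/2 }, consisting of the (N+1)/2 consecutive residues s, s+1, …, s+(N−1)/2. Then for all s, s' in ZMod N, the number of y in ZMod N for which exactly one of y ∈ I_s and y ∈ I_{s'} holds is at most 2 · min( (s'−s).val , (s−s').val ). -/
/-!
For any set `A` in a finite group, `d ↦ #(A ∆ (d +ᵥ A))` is subadditive along multiples and invariant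
under `d ↦ -d`, because translation preserves cardinality. For `A = {z | z.val ≤ m}` in `ZMod N` a
unit shift changes membership only at `0` and `m + 1`, so shifting by `d` costs at most
`2 * d.val`, and also at most `2 * (-d).val`.
-/

open Set Pointwise symmDiff

section

variable {G : Type*} [AddGroup G] (A : Set G)

theorem ncard_symmDiff_nsmul_vadd_le [Finite G] (g : G) (n : ℕ) :
    (A ∆ (n • g +ᵥ A)).ncard ≤ n * (A ∆ (g +ᵥ A)).ncard := by
  induction n with
  | zero => simp
  | succ n ih =>
    have hstep : (n • g +ᵥ A) ∆ ((n + 1) • g +ᵥ A) = n • g +ᵥ A ∆ (g +ᵥ A) := by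
      rw [vadd_set_symmDiff, succ_nsmul, ← vadd_vadd]
    calc (A ∆ ((n + 1) • g +ᵥ A)).ncard
        ≤ (A ∆ (n • g +ᵥ A) ∪ (n • g +ᵥ A) ∆ ((n + 1) • g +ᵥ A)).ncard :=
          ncard_le_ncard (symmDiff_triangle _ _ _)
      _ ≤ (A ∆ (n • g +ᵥ A)).ncard + ((n • g +ᵥ A) ∆ ((n + 1) • g +ᵥ A)).ncard :=
          ncard_union_le _ _
      _ ≤ (n + 1) * (A ∆ (g +ᵥ A)).ncard := by
          rw [hstep, ncard_vadd_set]
          linarith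

theorem ncard_symmDiff_neg_vadd (g : G) :
    (A ∆ (-g +ᵥ A)).ncard = (A ∆ (g +ᵥ A)).ncard := by
  rw [← ncard_vadd_set g, vadd_set_symmDiff, vadd_neg_vadd, symmDiff_comm]

end

namespace ZMod

variable {N : ℕ} [NeZero N] (m : ℕ)

theorem ncard_symmDiff_one_vadd_preimage_val_Iic_le :
    ((val ⁻¹' Iic m : Set (ZMod N)) ∆ ((1 : ZMod N) +ᵥ val ⁻¹' Iic m)).ncard ≤ 2 := by
  have hsub : (val ⁻¹' Iic m : Set (ZMod N)) ∆ ((1 : ZMod N) +ᵥ val ⁻¹' Iic m) ⊆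
      {0, ((m + 1 : ℕ) : ZMod N)} := by
    intro y hy
    rcases eq_or_ne y 0 with rfl | hy0
    · exact mem_insert _ _
    have hN : N ≠ 1 := by
      rintro rfl
      exact hy0 (Subsingleton.elim _ _)
    have hval : (y - 1).val = y.val - 1 := by
      have hy1 : 1 ≤ y.val := Nat.one_le_iff_ne_zero.2 ((val_ne_zero y).2 hy0)
      rw [val_sub (by rwa [val_one'' hN]), val_one'' hN]
    simp only [mem_symmDiff, mem_vadd_set_iff_neg_vadd_mem, vadd_eq_add, neg_add_eq_sub,
      mem_preimage, mem_Iic, hval] at hy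
    have hym : y.val = m + 1 := by omega
    rw [← hym, natCast_zmod_val]
    exact mem_insert_of_mem _ rfl
  calc _ ≤ ({0, ((m + 1 : ℕ) : ZMod N)} : Set (ZMod N)).ncard := ncard_le_ncard hsub
    _ ≤ 2 := (ncard_insert_le _ _).trans (by simp)

theorem ncard_symmDiff_vadd_preimage_val_Iic_le (d : ZMod N) :
    ((val ⁻¹' Iic m : Set (ZMod N)) ∆ (d +ᵥ val ⁻¹' Iic m)).ncard ≤ 2 * d.val := by
  have hsteps := ncard_symmDiff_nsmul_vadd_le (val ⁻¹' Iic m : Set (ZMod N)) 1 d.val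
  rw [nsmul_one, natCast_zmod_val] at hsteps
  calc _ ≤ d.val * 2 :=
        hsteps.trans (Nat.mul_le_mul_left _ (ncard_symmDiff_one_vadd_preimage_val_Iic_le m))
    _ = 2 * d.val := mul_comm _ _

end ZMod

theorem stmt_10_general (N : ℕ) (hN : 3 ≤ N) (s s' : ZMod N) :
    Nat.card {y : ZMod N |
        Xor' ((y - s).val ≤ (N - 1) / 2) ((y - s').val ≤ (N - 1) / 2)}
      ≤ 2 * min (s' - s).val (s - s').val := by
  have : NeZero N := ⟨by omega⟩
  set I : Set (ZMod N) := ZMod.val ⁻¹' Iic ((N - 1) / 2)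
  have hset : {y : ZMod N | Xor' ((y - s).val ≤ (N - 1) / 2) ((y - s').val ≤ (N - 1) / 2)} =
      s +ᵥ I ∆ ((s' - s) +ᵥ I) := by
    ext y
    simp only [vadd_set_symmDiff, vadd_vadd, vadd_eq_add, add_sub_cancel, mem_symmDiff,
      mem_vadd_set_iff_neg_vadd_mem, neg_add_eq_sub]
    rfl
  rw [hset, Nat.card_coe_set_eq, ncard_vadd_set, mul_min]
  refine le_min (ZMod.ncard_symmDiff_vadd_preimage_val_Iic_le _ _) ?_
  rw [← ncard_symmDiff_neg_vadd, neg_sub]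
  exact ZMod.ncard_symmDiff_vadd_preimage_val_Iic_le _ _

theorem stmt_10 (N : ℕ) (hN : 3 ≤ N) (hodd : Odd N) (s s' : ZMod N) :
    Nat.card {y : ZMod N |
        Xor' ((y - s).val ≤ (N - 1) / 2) ((y - s').val ≤ (N - 1) / 2)}
      ≤ 2 * min (s' - s).val (s - s').val :=
  stmt_10_general N hN s s'
end

section
/- Let N ≥ 3 be an odd natural number, let g : ZMod N → ZMod N be a bijection, and for s in ZMod N define h_s : ZMod N → Bool by h_s(x) = true iff (g(x) − s).val ≤ (N−1)/2. Let ε be a real number with 0 ≤ ε, and let s, s' in ZMod N satisfy min( (s'−s).val , (s−s').val ) ≤ ε·N. Then the number of x in ZMod N with h_s(x) ≠ h_{s'}(x) is at most 2·ε·N (as real numbers). -/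
/-- The hypothesis function of the discrete cube root learning task: label `x` by whether
`g x` lies in the cyclic interval `[s, s + (N-1)/2]` of `ZMod N`. -/
def hypLabel (N : ℕ) (g : ZMod N → ZMod N) (s : ZMod N) (x : ZMod N) : Bool :=
  decide ((g x - s).val ≤ (N - 1) / 2)

private lemma arith_key (N m a d1 e b : ℕ) (hNm : N = 2 * m + 1) (hd : d1 ≤ m)
    (ha : a < N) (he : e < N) (hde : d1 + e = 0 ∨ d1 + e = N)
    (hb : b = (a + e) % N) (hne : ¬(a ≤ m ↔ b ≤ m)) :
    a < d1 ∨ (m < a ∧ a ≤ m + d1) := by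
  have hb' : (a + e < N ∧ b = a + e) ∨ (N ≤ a + e ∧ b = a + e - N) := by
    rcases Nat.lt_or_ge (a + e) N with h | h
    · exact Or.inl ⟨h, by rw [hb, Nat.mod_eq_of_lt h]⟩
    · exact Or.inr ⟨h, by rw [hb, Nat.mod_eq_sub_mod h, Nat.mod_eq_of_lt (by omega)]⟩
  clear hb
  have hne' : (a ≤ m ∧ m < b) ∨ (m < a ∧ b ≤ m) := by
    by_cases h1 : a ≤ m <;> by_cases h2 : b ≤ m <;> simp [h1, h2] at hne ⊢ <;> omega
  clear hne
  omega

/-- Count elements of `ZMod N` whose shifted value satisfies a predicate. -/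
private lemma card_filter_val (N : ℕ) [NeZero N] (c : ZMod N) (p : ℕ → Prop)
    [DecidablePred p] :
    ((Finset.univ : Finset (ZMod N)).filter (fun y => p ((y - c).val))).card
      = ((Finset.range N).filter p).card := by
  apply Finset.card_bij' (fun y _ => (y - c).val) (fun v _ => (v : ZMod N) + c)
  · intro y hy
    simp only [Finset.mem_filter, Finset.mem_univ, true_and] at hy
    simp only [Finset.mem_filter, Finset.mem_range]
    exact ⟨ZMod.val_lt _, hy⟩
  · intro v hv
    simp only [Finset.mem_filter, Finset.mem_range] at hv
    simp only [Finset.mem_filter, Finset.mem_univ, true_and, add_sub_cancel_right,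
      ZMod.val_cast_of_lt hv.1]
    exact hv.2
  · intro y _
    rw [ZMod.natCast_zmod_val, sub_add_cancel]
  · intro v hv
    simp only [Finset.mem_filter, Finset.mem_range] at hv
    rw [add_sub_cancel_right, ZMod.val_cast_of_lt hv.1]

private lemma key_bound (N : ℕ) (hN : 3 ≤ N) (hodd : Odd N)
    (g : ZMod N → ZMod N) (hg : Function.Bijective g) (s s' : ZMod N)
    (hle : (s' - s).val ≤ (N - 1) / 2) :
    Nat.card {x : ZMod N | hypLabel N g s x ≠ hypLabel N g s' x}
      ≤ 2 * (s' - s).val := by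
  haveI : NeZero N := ⟨by omega⟩
  obtain ⟨m, hm⟩ := hodd
  have hmN : N = 2 * m + 1 := by omega
  have hm2 : (N - 1) / 2 = m := by omega
  set d1 := (s' - s).val with hd1
  set e := (s - s').val with hee
  have heN : e < N := ZMod.val_lt _
  have hd1m : d1 ≤ m := by omega
  have hde : d1 + e = 0 ∨ d1 + e = N := by
    have h0 : ((s' - s) + (s - s')).val = 0 := by
      simp
    rw [ZMod.val_add] at h0
    have hd1N : d1 < N := ZMod.val_lt _
    rcases Nat.lt_or_ge (d1 + e) N with h | h
    · left; rwa [Nat.mod_eq_of_lt h] at h0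
    · right
      rw [Nat.mod_eq_sub_mod h, Nat.mod_eq_of_lt (by omega)] at h0
      omega
  -- transfer through the bijection g
  have hcard : Nat.card {x : ZMod N | hypLabel N g s x ≠ hypLabel N g s' x}
      = Nat.card {y : ZMod N | decide ((y - s).val ≤ (N - 1) / 2)
          ≠ decide ((y - s').val ≤ (N - 1) / 2)} := by
    apply Nat.card_congr
    exact Equiv.subtypeEquiv (Equiv.ofBijective g hg) (fun x => Iff.rfl)
  rw [hcard, Nat.card_eq_fintype_card, Fintype.card_subtype]
  -- the disagreement set is contained in two arcs of length d1
  have hsub : (Finset.univ.filter (fun y : ZMod N =>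
        y ∈ {y : ZMod N | decide ((y - s).val ≤ (N - 1) / 2)
          ≠ decide ((y - s').val ≤ (N - 1) / 2)}))
      ⊆ (Finset.univ.filter (fun y : ZMod N => (y - s).val < d1))
        ∪ (Finset.univ.filter (fun y : ZMod N =>
            m < (y - s).val ∧ (y - s).val ≤ m + d1)) := by
    intro y hy
    simp only [Finset.mem_filter, Finset.mem_univ, true_and, Set.mem_setOf_eq,
      ne_eq, decide_eq_decide] at hy
    have hval : (y - s').val = ((y - s).val + e) % N := by
      have : y - s' = (y - s) + (s - s') := by ring
      rw [this, ZMod.val_add]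
    rw [hm2] at hy
    have := arith_key N m ((y - s).val) d1 e ((y - s').val) hmN hd1m
      (ZMod.val_lt _) heN hde hval hy
    simp only [Finset.mem_union, Finset.mem_filter, Finset.mem_univ, true_and]
    exact this
  calc (Finset.univ.filter (fun y : ZMod N =>
        y ∈ {y : ZMod N | decide ((y - s).val ≤ (N - 1) / 2)
          ≠ decide ((y - s').val ≤ (N - 1) / 2)})).card
      ≤ ((Finset.univ.filter (fun y : ZMod N => (y - s).val < d1))
        ∪ (Finset.univ.filter (fun y : ZMod N =>
            m < (y - s).val ∧ (y - s).val ≤ m + d1))).card :=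
        Finset.card_le_card hsub
    _ ≤ (Finset.univ.filter (fun y : ZMod N => (y - s).val < d1)).card
        + (Finset.univ.filter (fun y : ZMod N =>
            m < (y - s).val ∧ (y - s).val ≤ m + d1)).card :=
        Finset.card_union_le _ _
    _ ≤ d1 + d1 := by
        apply Nat.add_le_add
        · rw [card_filter_val N s (fun v => v < d1)]
          calc ((Finset.range N).filter (fun v => v < d1)).card
              ≤ (Finset.range d1).card := by
                apply Finset.card_le_card
                intro v hv
                simp only [Finset.mem_filter, Finset.mem_range] at hv ⊢
                exact hv.2
            _ = d1 := Finset.card_range d1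
        · rw [card_filter_val N s (fun v => m < v ∧ v ≤ m + d1)]
          calc ((Finset.range N).filter (fun v => m < v ∧ v ≤ m + d1)).card
              ≤ (Finset.Ioc m (m + d1)).card := by
                apply Finset.card_le_card
                intro v hv
                simp only [Finset.mem_filter, Finset.mem_range, Finset.mem_Ioc] at hv ⊢
                exact hv.2
            _ = d1 := by rw [Nat.card_Ioc]; omega
    _ = 2 * d1 := by omega

theorem stmt_11 (N : ℕ) (hN : 3 ≤ N) (hodd : Odd N)
    (g : ZMod N → ZMod N) (hg : Function.Bijective g)
    (ε : ℝ) (hε : 0 ≤ ε) (s s' : ZMod N)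
    (hss' : (min (s' - s).val (s - s').val : ℝ) ≤ ε * N) :
    (Nat.card {x : ZMod N | hypLabel N g s x ≠ hypLabel N g s' x} : ℝ) ≤ 2 * ε * N := by
  haveI : NeZero N := ⟨by omega⟩
  obtain ⟨m, hm⟩ := hodd
  have hmN : N = 2 * m + 1 := by omega
  set d1 := (s' - s).val with hd1
  set e := (s - s').val with hee
  have hde : d1 + e = 0 ∨ d1 + e = N := by
    have h0 : ((s' - s) + (s - s')).val = 0 := by simp
    rw [ZMod.val_add] at h0
    have hd1N : d1 < N := ZMod.val_lt _
    have heN : e < N := ZMod.val_lt _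
    rcases Nat.lt_or_ge (d1 + e) N with h | h
    · left; rwa [Nat.mod_eq_of_lt h] at h0
    · right
      rw [Nat.mod_eq_sub_mod h, Nat.mod_eq_of_lt (by omega)] at h0
      omega
  have hminm : min d1 e ≤ (N - 1) / 2 := by
    rcases hde with h | h <;> omega
  have hmincast : (min d1 e : ℝ) = min (d1 : ℝ) (e : ℝ) := by
    push_cast [Nat.cast_min]; ring_nf
  -- main nat bound
  have hnat : Nat.card {x : ZMod N | hypLabel N g s x ≠ hypLabel N g s' x}
      ≤ 2 * min d1 e := by
    rcases le_total d1 e with h | h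
    · rw [min_eq_left h]
      exact key_bound N hN ⟨m, hm⟩ g hg s s' (by omega)
    · rw [min_eq_right h]
      have hset : {x : ZMod N | hypLabel N g s x ≠ hypLabel N g s' x}
          = {x : ZMod N | hypLabel N g s' x ≠ hypLabel N g s x} := by
        ext x; simp [ne_comm]
      rw [hset]
      exact key_bound N hN ⟨m, hm⟩ g hg s' s (by omega)
  have h1 : (Nat.card {x : ZMod N | hypLabel N g s x ≠ hypLabel N g s' x} : ℝ)
      ≤ (2 * min d1 e : ℕ) := by exact_mod_cast hnat
  have h2 : ((2 * min d1 e : ℕ) : ℝ) ≤ 2 * ε * N := by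
    push_cast
    have : (min d1 e : ℝ) ≤ ε * N := by
      rw [hmincast] at hss' ⊢
      exact hss'
    nlinarith
  linarith
end
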